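/- arXiv:2004.02502 — 3 statements merged into one kernel-verified Lean document; each statement's English description precedes it below -/
import Mathlib

section
/- Let f be a Boolean function on disjoint variable sets X and Y admitting an X-partition f = ⋁_{i=1}^n (p_i(X) ∧ s_i(Y)), i.e., the p_i are pairwise inconsistent (p_i ∧ p_j = false for i ≠ j), their disjunction is true, and no p_i is false. If the partition is compressed (s_i ≠ s_j for i ≠ j), then this compressed X-partition is unique: any other compressed X-partition of f has the same set of (prime, sub) pairs. -/
/-!
Whenever `p i x` holds, the sub `s i` is the cofactor `f x`, since the primes are pairwise
inconsistent. If the subs are pairwise distinct, this turns around: `p i x` holds exactly when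
`f x = s i`. So every pair `(p i, s i)` is determined by its sub, and the sub by any point of
its prime, and both partitions produce the same pairs.
-/

/-- An X-partition of `f : (X → Bool) → (Y → Bool) → Bool`, given as a family of
prime/sub pairs indexed by `Fin n`. -/
structure IsXPartition {X Y : Type} (f : (X → Bool) → (Y → Bool) → Bool)
    (n : ℕ) (p : Fin n → (X → Bool) → Bool) (s : Fin n → (Y → Bool) → Bool) : Prop where
  pairwise_inconsistent : ∀ i j : Fin n, i ≠ j → ∀ x : X → Bool, ¬(p i x = true ∧ p j x = true)
  exhaustive : ∀ x : X → Bool, ∃ i : Fin n, p i x = true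
  nonfalse : ∀ i : Fin n, ∃ x : X → Bool, p i x = true
  decomposes : ∀ (x : X → Bool) (y : Y → Bool),
    f x y = true ↔ ∃ i : Fin n, p i x = true ∧ s i y = true

namespace IsXPartition

variable {X Y : Type} {f : (X → Bool) → (Y → Bool) → Bool} {n m : ℕ}
  {p : Fin n → (X → Bool) → Bool} {s : Fin n → (Y → Bool) → Bool}
  {q : Fin m → (X → Bool) → Bool} {r : Fin m → (Y → Bool) → Bool}

theorem sub_eq_of_prime (h : IsXPartition f n p s) {i : Fin n} {x : X → Bool}
    (hx : p i x = true) : s i = f x := by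
  funext y
  rw [Bool.eq_iff_iff, h.decomposes]
  refine ⟨fun hy => ⟨i, hx, hy⟩, ?_⟩
  rintro ⟨j, hj, hy⟩
  obtain rfl : j = i := by_contra fun hne => h.pairwise_inconsistent j i hne x ⟨hj, hx⟩
  exact hy

theorem prime_iff_sub_eq (h : IsXPartition f n p s) (hs : Function.Injective s)
    {i : Fin n} {x : X → Bool} : p i x = true ↔ s i = f x := by
  refine ⟨h.sub_eq_of_prime, fun hsi => ?_⟩
  obtain ⟨j, hj⟩ := h.exhaustive x
  rwa [hs (hsi.trans (h.sub_eq_of_prime hj).symm)]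

theorem range_subset_of_injective (hp : IsXPartition f n p s) (hq : IsXPartition f m q r)
    (hs : Function.Injective s) (hr : Function.Injective r) :
    Set.range (fun i => (p i, s i)) ⊆ Set.range (fun j => (q j, r j)) := by
  rintro _ ⟨i, rfl⟩
  obtain ⟨x, hx⟩ := hp.nonfalse i
  obtain ⟨j, hj⟩ := hq.exhaustive x
  have hsr : s i = r j := (hp.sub_eq_of_prime hx).trans (hq.sub_eq_of_prime hj).symm
  refine ⟨j, Prod.ext (funext fun x' => ?_) hsr.symm⟩
  rw [Bool.eq_iff_iff, hq.prime_iff_sub_eq hr, hp.prime_iff_sub_eq hs, hsr]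

end IsXPartition

/-- the compressed X-partition of a Boolean function is unique
(as a set of prime/sub pairs). -/
theorem compressed_partition_unique {X Y : Type}
    (f : (X → Bool) → (Y → Bool) → Bool)
    (n m : ℕ) (p : Fin n → (X → Bool) → Bool) (s : Fin n → (Y → Bool) → Bool)
    (q : Fin m → (X → Bool) → Bool) (r : Fin m → (Y → Bool) → Bool)
    (hp : IsXPartition f n p s) (hq : IsXPartition f m q r)
    (hcomp_s : ∀ i j : Fin n, s i = s j → i = j)
    (hcomp_r : ∀ i j : Fin m, r i = r j → i = j) :
    Set.range (fun i : Fin n => (p i, s i)) = Set.range (fun j : Fin m => (q j, r j)) :=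
  (hp.range_subset_of_injective hq hcomp_s hcomp_r).antisymm
    (hq.range_subset_of_injective hp hcomp_r hcomp_s)
end

section
/- Given Boolean functions f and g over disjoint variable sets X and Y with X-partitions f = ⋁_{i=1}^n (p_i ∧ s_i) and g = ⋁_{j=1}^m (q_j ∧ r_j) (primes pairwise inconsistent, jointly exhaustive, nonfalse), and any binary Boolean operation ∘, the family {((p_i ∧ q_j), (s_i ∘ r_j)) : p_i ∧ q_j ≢ false} is an X-partition of f ∘ g: the primes p_i ∧ q_j are pairwise inconsistent and jointly exhaustive, and (f ∘ g)(x,y) = ⋁_{i,j} ((p_i x ∧ q_j x) ∧ (s_i y ∘ r_j y)). -/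
/-! At each `x` the primes `p i` and `q j` true at `x` are unique, so `f x = s i` and `g x = r j`,
hence `(f op g) x = s i op r j`; this `(i, j)` is the unique product prime true at `x`. -/

section

variable {α β ι κ : Type*}

theorem eq_sub_of_prime_eq_true {h : α → β → Bool} {p : ι → α → Bool} {s : ι → β → Bool}
    (hdisj : ∀ i i', i ≠ i' → ∀ x, ¬(p i x = true ∧ p i' x = true))
    (hdec : ∀ x y, h x y = true ↔ ∃ i, p i x = true ∧ s i y = true)
    {i : ι} {x : α} (hi : p i x = true) (y : β) : h x y = s i y := by
  rw [Bool.eq_iff_iff, hdec]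
  refine ⟨fun ⟨i', hi', hs⟩ => ?_, fun hs => ⟨i, hi, hs⟩⟩
  obtain rfl : i' = i := by
    by_contra hne
    exact hdisj i' i hne x ⟨hi', hi⟩
  exact hs

theorem and_primes_pairwise_inconsistent {p : ι → α → Bool} {q : κ → α → Bool}
    (hp : ∀ i i', i ≠ i' → ∀ x, ¬(p i x = true ∧ p i' x = true))
    (hq : ∀ j j', j ≠ j' → ∀ x, ¬(q j x = true ∧ q j' x = true)) :
    ∀ ij ij' : ι × κ, ij ≠ ij' → ∀ x,
      ¬((p ij.1 x && q ij.2 x) = true ∧ (p ij'.1 x && q ij'.2 x) = true) := by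
  rintro ⟨i, j⟩ ⟨i', j'⟩ hne x ⟨h, h'⟩
  rw [Bool.and_eq_true] at h h'
  by_cases hi : i = i'
  · subst hi
    exact hq j j' (fun hj => hne (hj ▸ rfl)) x ⟨h.2, h'.2⟩
  · exact hp i i' hi x ⟨h.1, h'.1⟩

theorem exists_and_primes_eq_true {p : ι → α → Bool} {q : κ → α → Bool}
    (hp : ∀ x, ∃ i, p i x = true) (hq : ∀ x, ∃ j, q j x = true) (x : α) :
    ∃ i j, (p i x && q j x) = true := by
  obtain ⟨i, hi⟩ := hp x
  obtain ⟨j, hj⟩ := hq x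
  exact ⟨i, j, by rw [hi, hj]; rfl⟩

theorem op_eq_true_iff_exists_and_primes {f g : α → β → Bool} (op : Bool → Bool → Bool)
    {p : ι → α → Bool} {s : ι → β → Bool} {q : κ → α → Bool} {r : κ → β → Bool}
    (hp_disj : ∀ i i', i ≠ i' → ∀ x, ¬(p i x = true ∧ p i' x = true))
    (hp_exh : ∀ x, ∃ i, p i x = true)
    (hp_dec : ∀ x y, f x y = true ↔ ∃ i, p i x = true ∧ s i y = true)
    (hq_disj : ∀ j j', j ≠ j' → ∀ x, ¬(q j x = true ∧ q j' x = true))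
    (hq_exh : ∀ x, ∃ j, q j x = true)
    (hq_dec : ∀ x y, g x y = true ↔ ∃ j, q j x = true ∧ r j y = true) (x : α) (y : β) :
    op (f x y) (g x y) = true ↔
      ∃ i j, (p i x && q j x) = true ∧ op (s i y) (r j y) = true := by
  have hsub : ∀ i j, (p i x && q j x) = true → op (f x y) (g x y) = op (s i y) (r j y) := by
    intro i j hij
    rw [Bool.and_eq_true] at hij
    rw [eq_sub_of_prime_eq_true hp_disj hp_dec hij.1, eq_sub_of_prime_eq_true hq_disj hq_dec hij.2]
  obtain ⟨i, j, hij⟩ := exists_and_primes_eq_true hp_exh hq_exh x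
  refine ⟨fun h => ⟨i, j, hij, hsub i j hij ▸ h⟩, ?_⟩
  rintro ⟨i', j', hij', h⟩
  rwa [hsub i' j' hij']

end

theorem apply_partition_product_general {X Y : Type}
    (f g : (X → Bool) → (Y → Bool) → Bool) (op : Bool → Bool → Bool)
    (n m : ℕ) (p : Fin n → (X → Bool) → Bool) (s : Fin n → (Y → Bool) → Bool)
    (q : Fin m → (X → Bool) → Bool) (r : Fin m → (Y → Bool) → Bool)
    (hp_disj : ∀ i i' : Fin n, i ≠ i' → ∀ x : X → Bool, ¬(p i x = true ∧ p i' x = true))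
    (hp_exh : ∀ x : X → Bool, ∃ i : Fin n, p i x = true)
    (hp_dec : ∀ (x : X → Bool) (y : Y → Bool),
      f x y = true ↔ ∃ i : Fin n, p i x = true ∧ s i y = true)
    (hq_disj : ∀ j j' : Fin m, j ≠ j' → ∀ x : X → Bool, ¬(q j x = true ∧ q j' x = true))
    (hq_exh : ∀ x : X → Bool, ∃ j : Fin m, q j x = true)
    (hq_dec : ∀ (x : X → Bool) (y : Y → Bool),
      g x y = true ↔ ∃ j : Fin m, q j x = true ∧ r j y = true) :
    (∀ (ij ij' : Fin n × Fin m), ij ≠ ij' → ∀ x : X → Bool,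
      ¬((p ij.1 x && q ij.2 x) = true ∧ (p ij'.1 x && q ij'.2 x) = true)) ∧
    (∀ x : X → Bool, ∃ i : Fin n, ∃ j : Fin m, (p i x && q j x) = true) ∧
    (∀ (x : X → Bool) (y : Y → Bool),
      op (f x y) (g x y) = true ↔
        ∃ i : Fin n, ∃ j : Fin m, (p i x && q j x) = true ∧ op (s i y) (r j y) = true) :=
  ⟨and_primes_pairwise_inconsistent hp_disj hq_disj,
    exists_and_primes_eq_true hp_exh hq_exh,
    op_eq_true_iff_exists_and_primes op hp_disj hp_exh hp_dec hq_disj hq_exh hq_dec⟩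

/-- given X-partitions of `f` and `g` and a binary Boolean operation `op`,
the products `(p_i ∧ q_j, s_i op r_j)` form an X-partition of `f op g`:
the product primes are pairwise inconsistent and jointly exhaustive, and the
decomposition equation holds. -/
theorem apply_partition_product {X Y : Type}
    (f g : (X → Bool) → (Y → Bool) → Bool) (op : Bool → Bool → Bool)
    (n m : ℕ) (p : Fin n → (X → Bool) → Bool) (s : Fin n → (Y → Bool) → Bool)
    (q : Fin m → (X → Bool) → Bool) (r : Fin m → (Y → Bool) → Bool)
    (hp_disj : ∀ i i' : Fin n, i ≠ i' → ∀ x : X → Bool, ¬(p i x = true ∧ p i' x = true))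
    (hp_exh : ∀ x : X → Bool, ∃ i : Fin n, p i x = true)
    (hp_nf : ∀ i : Fin n, ∃ x : X → Bool, p i x = true)
    (hp_dec : ∀ (x : X → Bool) (y : Y → Bool),
      f x y = true ↔ ∃ i : Fin n, p i x = true ∧ s i y = true)
    (hq_disj : ∀ j j' : Fin m, j ≠ j' → ∀ x : X → Bool, ¬(q j x = true ∧ q j' x = true))
    (hq_exh : ∀ x : X → Bool, ∃ j : Fin m, q j x = true)
    (hq_nf : ∀ j : Fin m, ∃ x : X → Bool, q j x = true)
    (hq_dec : ∀ (x : X → Bool) (y : Y → Bool),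
      g x y = true ↔ ∃ j : Fin m, q j x = true ∧ r j y = true) :
    (∀ (ij ij' : Fin n × Fin m), ij ≠ ij' → ∀ x : X → Bool,
      ¬((p ij.1 x && q ij.2 x) = true ∧ (p ij'.1 x && q ij'.2 x) = true)) ∧
    (∀ x : X → Bool, ∃ i : Fin n, ∃ j : Fin m, (p i x && q j x) = true) ∧
    (∀ (x : X → Bool) (y : Y → Bool),
      op (f x y) (g x y) = true ↔
        ∃ i : Fin n, ∃ j : Fin m, (p i x && q j x) = true ∧ op (s i y) (r j y) = true) :=
  apply_partition_product_general f g op n m p s q r hp_disj hp_exh hp_dec hq_disj hq_exh hq_dec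
end

section
/- For an X-partition {(p_1,s_1),…,(p_n,s_n)} of f over disjoint finite variable sets X and Y, the model count of f equals the sum over i of (model count of p_i) × (model count of s_i). -/
/-! Since the `p i` are pairwise inconsistent, the models of `f` split as the disjoint union over
`i` of the products `{x | p i x} × {y | s i y}`, whose sizes multiply. -/

open Finset

theorem Finset.card_biUnion_product {ι α β : Type*} [DecidableEq α] [DecidableEq β]
    (t : Finset ι) (A : ι → Finset α) (B : ι → Finset β)
    (hA : (t : Set ι).PairwiseDisjoint A) :
    (t.biUnion fun i => A i ×ˢ B i).card = ∑ i ∈ t, (A i).card * (B i).card := by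
  rw [card_biUnion fun i hi j hj hij => disjoint_product.2 (.inl (hA hi hj hij))]
  simp only [card_product]

theorem Fintype.card_subtype_exists_and {ι α β : Type*} [Fintype ι] [Fintype α] [Fintype β]
    (P : ι → α → Prop) (Q : ι → β → Prop) [∀ i, DecidablePred (P i)] [∀ i, DecidablePred (Q i)]
    [DecidablePred fun ab : α × β => ∃ i, P i ab.1 ∧ Q i ab.2]
    (hP : Pairwise fun i j => ∀ a, P i a → ¬P j a) :
    Fintype.card {ab : α × β // ∃ i, P i ab.1 ∧ Q i ab.2} =
      ∑ i, Fintype.card {a // P i a} * Fintype.card {b // Q i b} := by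
  classical
  have hdisj : ((univ : Finset ι) : Set ι).PairwiseDisjoint fun i => univ.filter (P i) :=
    fun i _ j _ hij => disjoint_filter.2 fun a _ => hP hij a
  simp only [Fintype.card_subtype, ← card_biUnion_product _ _ _ hdisj]
  congr 1
  ext ⟨a, b⟩
  simp

theorem partition_model_count_general {X Y : Type} [Fintype X] [Fintype Y] [DecidableEq X] [DecidableEq Y]
    (f : (X → Bool) → (Y → Bool) → Bool)
    (n : ℕ) (p : Fin n → (X → Bool) → Bool) (s : Fin n → (Y → Bool) → Bool)
    (hdisj : ∀ i j : Fin n, i ≠ j → ∀ x : X → Bool, ¬(p i x = true ∧ p j x = true))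
    (hdec : ∀ (x : X → Bool) (y : Y → Bool),
      f x y = true ↔ ∃ i : Fin n, p i x = true ∧ s i y = true) :
    Fintype.card {xy : (X → Bool) × (Y → Bool) // f xy.1 xy.2 = true} =
      ∑ i : Fin n,
        Fintype.card {x : X → Bool // p i x = true} *
          Fintype.card {y : Y → Bool // s i y = true} := by
  rw [← Fintype.card_subtype_exists_and (fun i x => p i x = true) (fun i y => s i y = true)
    fun i j hij x hi hj => hdisj i j hij x ⟨hi, hj⟩]
  exact Fintype.card_congr (Equiv.subtypeEquivRight fun xy => hdec xy.1 xy.2)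

/-- for an X-partition `{(p_i, s_i)}` of `f`, the model count of `f` equals
`∑ i, (model count of p_i) * (model count of s_i)`. -/
theorem partition_model_count {X Y : Type} [Fintype X] [Fintype Y] [DecidableEq X] [DecidableEq Y]
    (f : (X → Bool) → (Y → Bool) → Bool)
    (n : ℕ) (p : Fin n → (X → Bool) → Bool) (s : Fin n → (Y → Bool) → Bool)
    (hdisj : ∀ i j : Fin n, i ≠ j → ∀ x : X → Bool, ¬(p i x = true ∧ p j x = true))
    (hexh : ∀ x : X → Bool, ∃ i : Fin n, p i x = true)
    (hnf : ∀ i : Fin n, ∃ x : X → Bool, p i x = true)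
    (hdec : ∀ (x : X → Bool) (y : Y → Bool),
      f x y = true ↔ ∃ i : Fin n, p i x = true ∧ s i y = true) :
    Fintype.card {xy : (X → Bool) × (Y → Bool) // f xy.1 xy.2 = true} =
      ∑ i : Fin n,
        Fintype.card {x : X → Bool // p i x = true} *
          Fintype.card {y : Y → Bool // s i y = true} :=
  partition_model_count_general f n p s hdisj hdec
end
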